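/- (MBP preservation of the first-order stabilized L1 scheme.) Let 0 < α < 1, ε > 0, κ ≥ 2, M ≥ 2, h > 0, and let 0 = t_0 < ⋯ < t_N = T be a temporal mesh with L1 kernels a^{(n)}_{n−k}. Let D_h = I_M ⊗ G + G ⊗ I_M be the discrete Laplacian matrix and f_κ(x) = x³ − (1+κ)x applied entrywise. Suppose Φ^0, Φ^1, …, Φ^N ∈ ℝ^{M²} satisfy ‖Φ^0‖_∞ ≤ 1 and, for every 0 ≤ n ≤ N−1, the scheme equation Σ_{k=0}^n a^{(n)}_{n−k}(Φ^{k+1} − Φ^k) + κΦ^{n+1} − ε² D_h Φ^{n+1} + f_κ(Φ^n) = 0. Then ‖Φ^n‖_∞ ≤ 1 for all 0 ≤ n ≤ N, regardless of the time-step sizes. -/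

import Mathlib

open Matrix

/-- The L1 discrete convolution kernel, indexed by the lag: `L1kernel α t n j = a^{(n)}_j`. -/
noncomputable def L1kernel (α : ℝ) (t : ℕ → ℝ) (n j : ℕ) : ℝ :=
  (1 / (Real.Gamma (1 - α) * (t (n - j + 1) - t (n - j)))) *
    ∫ s in (t (n - j))..(t (n - j + 1)), (t (n + 1) - s) ^ (-α)

/-- The `M × M` tridiagonal matrix `G` with `G_{11} = G_{MM} = -1/h²`,
`G_{ii} = -2/h²` for interior `i`, and `G_{i,i+1} = G_{i+1,i} = 1/h²`. -/
noncomputable def Gmat (M : ℕ) (h : ℝ) : Matrix (Fin M) (Fin M) ℝ :=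
  Matrix.of fun i j =>
    if (i : ℕ) = (j : ℕ) then
      (if (i : ℕ) = 0 ∨ (i : ℕ) = M - 1 then -1 / h ^ 2 else -2 / h ^ 2)
    else if (i : ℕ) + 1 = (j : ℕ) ∨ (j : ℕ) + 1 = (i : ℕ) then 1 / h ^ 2 else 0

/-- The discrete Laplacian `D_h = I_M ⊗ G + G ⊗ I_M ∈ ℝ^{M²×M²}`. -/
noncomputable def Dh (M : ℕ) (h : ℝ) : Matrix (Fin M × Fin M) (Fin M × Fin M) ℝ :=
  Matrix.kroneckerMap (· * ·) (1 : Matrix (Fin M) (Fin M) ℝ) (Gmat M h) +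
    Matrix.kroneckerMap (· * ·) (Gmat M h) (1 : Matrix (Fin M) (Fin M) ℝ)

/-!
The L1 weights `a^{(n)}_{n-k}` are secant slopes of the concave function `x ↦ x ^ (1 - α)`
divided by `Γ(2 - α)`, so they are nonnegative and nondecreasing in `k`. At an index where
`Φ^{n+1}` is maximal, `D_h Φ^{n+1} ≤ 0` because `D_h` has zero row sums and nonnegative
off-diagonal entries; summation by parts bounds the history term below by
`a^{(n)}_0 (Φ^{n+1} - 1)` once the earlier iterates lie in `[-1, 1]`, and `f_κ ≥ -κ` on
`[-1, 1]`. The scheme then forces `(a^{(n)}_0 + κ)(Φ^{n+1} - 1) ≤ 0`. The scheme is odd in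
`Φ`, which gives the lower bound.
-/

open Finset

lemma Matrix.mulVec_apply_nonpos_of_forall_le {ι : Type*} [Fintype ι] (A : Matrix ι ι ℝ)
    (hrow : ∀ i, ∑ j, A i j = 0) (hoff : ∀ i j, i ≠ j → 0 ≤ A i j) (v : ι → ℝ) (i : ι)
    (hi : ∀ j, v j ≤ v i) : (A *ᵥ v) i ≤ 0 := by
  have hcentre : (A *ᵥ v) i = ∑ j, A i j * (v j - v i) := by
    simp only [Matrix.mulVec, dotProduct, mul_sub, sum_sub_distrib, ← sum_mul,
      hrow, zero_mul, sub_zero]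
  rw [hcentre]
  refine sum_nonpos fun j _ => ?_
  rcases eq_or_ne i j with rfl | hij
  · simp
  · exact mul_nonpos_of_nonneg_of_nonpos (hoff i j hij) (sub_nonpos.2 (hi j))

lemma Gmat_nonneg_of_ne (M : ℕ) (h : ℝ) {i j : Fin M} (hij : i ≠ j) : 0 ≤ Gmat M h i j := by
  rw [Gmat, Matrix.of_apply, if_neg (Fin.val_ne_of_ne hij)]
  split_ifs <;> positivity

lemma Gmat_row_sum {M : ℕ} (hM : 2 ≤ M) (h : ℝ) (i : Fin M) : ∑ j, Gmat M h i j = 0 := by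
  have hi := i.isLt
  set d : ℝ := if (i : ℕ) = 0 ∨ (i : ℕ) = M - 1 then -1 / h ^ 2 else -2 / h ^ 2
  let row : ℕ → ℝ := fun j =>
    if (i : ℕ) = j then d else if (i : ℕ) + 1 = j ∨ j + 1 = (i : ℕ) then 1 / h ^ 2 else 0
  have hrow : ∀ j, row j = (if j = i then d else 0) + (if j = i + 1 then 1 / h ^ 2 else 0) +
      (if j = i - 1 then (if (i : ℕ) = 0 then 0 else 1 / h ^ 2) else 0) := by
    intro j
    simp only [row]
    split_ifs <;> first | (exfalso; omega) | ring
  calc ∑ j, Gmat M h i j = ∑ j ∈ range M, row j := Fin.sum_univ_eq_sum_range row M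
    _ = 0 := by
      simp only [hrow, sum_add_distrib, sum_ite_eq', mem_range, d]
      split_ifs <;> first | (exfalso; omega) | ring

lemma Matrix.sum_kroneckerMap_mul_apply {R l m n p : Type*} [CommSemiring R] [Fintype m]
    [Fintype p] (A : Matrix l m R) (B : Matrix n p R) (i : l × n) :
    ∑ j, Matrix.kroneckerMap (· * ·) A B i j = (∑ j, A i.1 j) * ∑ j, B i.2 j := by
  rw [Fintype.sum_prod_type, sum_mul_sum]
  rfl

lemma Dh_row_sum {M : ℕ} (hM : 2 ≤ M) (h : ℝ) (i : Fin M × Fin M) : ∑ j, Dh M h i j = 0 := by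
  simp only [Dh, Matrix.add_apply, sum_add_distrib, Matrix.sum_kroneckerMap_mul_apply,
    Gmat_row_sum hM, mul_zero, zero_mul, add_zero]

lemma Dh_nonneg_of_ne (M : ℕ) (h : ℝ) {i j : Fin M × Fin M} (hij : i ≠ j) : 0 ≤ Dh M h i j := by
  obtain ⟨i₁, i₂⟩ := i
  obtain ⟨j₁, j₂⟩ := j
  simp only [Dh, Matrix.add_apply, Matrix.kroneckerMap_apply, Matrix.one_apply]
  by_cases h₁ : i₁ = j₁
  · have h₂ : i₂ ≠ j₂ := fun h₂ => hij (by rw [h₁, h₂])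
    simpa [h₁, h₂] using Gmat_nonneg_of_ne M h h₂
  · by_cases h₂ : i₂ = j₂
    · simpa [h₁, h₂] using Gmat_nonneg_of_ne M h h₁
    · simp [h₁, h₂]

lemma intervalIntegral_sub_rpow_neg {α : ℝ} (hα : α < 1) (a b c : ℝ) :
    ∫ s in a..b, (c - s) ^ (-α) = ((c - a) ^ (1 - α) - (c - b) ^ (1 - α)) / (1 - α) := by
  rw [intervalIntegral.integral_comp_sub_left (fun x => x ^ (-α)) c,
    integral_rpow (Or.inl (by linarith)), neg_add_eq_sub]

lemma L1kernel_eq_slope {α : ℝ} (hα : α < 1) (t : ℕ → ℝ) {n k : ℕ} (hk : k ≤ n) :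
    L1kernel α t n (n - k) =
      slope (fun x : ℝ => x ^ (1 - α)) (t (n + 1) - t (k + 1)) (t (n + 1) - t k) /
        Real.Gamma (2 - α) := by
  have hΓ : Real.Gamma (2 - α) = (1 - α) * Real.Gamma (1 - α) := by
    rw [← Real.Gamma_add_one (by linarith)]; ring_nf
  rw [L1kernel, Nat.sub_sub_self hk, intervalIntegral_sub_rpow_neg hα, slope_def_field, hΓ]
  field_simp
  ring

lemma L1kernel_nonneg {α : ℝ} (hα : α < 1) {t : ℕ → ℝ} {n k : ℕ} (hk : k ≤ n)
    (h₀ : t k ≤ t (n + 1)) (h₁ : t (k + 1) ≤ t (n + 1)) :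
    0 ≤ L1kernel α t n (n - k) := by
  rw [L1kernel_eq_slope hα t hk]
  exact div_nonneg
    ((Real.monotoneOn_rpow_Ici_of_exponent_nonneg (by linarith)).slope_nonneg
      (Set.mem_Ici.2 (by linarith)) (Set.mem_Ici.2 (by linarith)))
    (Real.Gamma_pos_of_pos (by linarith)).le

lemma L1kernel_le_succ {α : ℝ} (hα0 : 0 ≤ α) (hα1 : α < 1) {t : ℕ → ℝ} {n k : ℕ} (hk : k < n)
    (h₀ : t k < t (k + 1)) (h₁ : t (k + 1) < t (k + 2)) (hlast : t (k + 2) ≤ t (n + 1)) :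
    L1kernel α t n (n - k) ≤ L1kernel α t n (n - (k + 1)) := by
  rw [L1kernel_eq_slope hα1 t hk.le, L1kernel_eq_slope hα1 t hk, slope_def_field,
    slope_def_field]
  gcongr ?_ / _
  · exact (Real.Gamma_pos_of_pos (by linarith)).le
  exact (Real.concaveOn_rpow (by linarith) (by linarith)).slope_anti_adjacent
    (Set.mem_Ici.2 (by linarith)) (Set.mem_Ici.2 (by linarith)) (by linarith) (by linarith)

lemma mul_sub_one_le_sum_mul_sub (w x : ℕ → ℝ) (n : ℕ) (hw0 : 0 ≤ w 0)
    (hw : ∀ k < n, w k ≤ w (k + 1)) (hx : ∀ k ≤ n, x k ≤ 1) :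
    w n * (x (n + 1) - 1) ≤ ∑ k ∈ range (n + 1), w k * (x (k + 1) - x k) := by
  induction n with
  | zero => simpa using mul_le_mul_of_nonneg_left (by linarith [hx 0 le_rfl]) hw0
  | succ n ih =>
    have hprev := ih (fun k hk => hw k (by omega)) (fun k hk => hx k (by omega))
    rw [sum_range_succ]
    nlinarith [mul_nonneg (sub_nonneg.2 (hw n n.lt_succ_self)) (sub_nonneg.2 (hx (n + 1) le_rfl))]

lemma neg_le_pow_three_sub_mul {κ x : ℝ} (hκ : 2 ≤ κ) (hx : |x| ≤ 1) :
    -κ ≤ x ^ 3 - (1 + κ) * x := by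
  obtain ⟨hx₁, hx₂⟩ := abs_le.1 hx
  have hfactor : x ^ 3 - (1 + κ) * x + κ = (1 - x) * (κ - x - x ^ 2) := by ring
  nlinarith [mul_nonneg (sub_nonneg.2 hx₂) (by nlinarith : (0 : ℝ) ≤ κ - x - x ^ 2)]

section L1Step

variable {ι : Type*} [Fintype ι] {A : Matrix ι ι ℝ} {w : ℕ → ℝ} {ε κ : ℝ} {Φ : ℕ → ι → ℝ}
  {n : ℕ}

lemma L1scheme_step_le_one (hrow : ∀ i, ∑ j, A i j = 0) (hoff : ∀ i j, i ≠ j → 0 ≤ A i j)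
    (hκ : 2 ≤ κ) (hw0 : 0 ≤ w 0) (hw : ∀ k < n, w k ≤ w (k + 1))
    (hΦ : ∀ k ≤ n, ∀ i, |Φ k i| ≤ 1)
    (hscheme : (∑ k ∈ range (n + 1), w k • (Φ (k + 1) - Φ k)) + κ • Φ (n + 1)
      - ε ^ 2 • A *ᵥ Φ (n + 1) + (fun i => Φ n i ^ 3 - (1 + κ) * Φ n i) = 0) (i : ι) :
    Φ (n + 1) i ≤ 1 := by
  have : Nonempty ι := ⟨i⟩
  obtain ⟨i₀, hi₀⟩ := Finite.exists_max (Φ (n + 1))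
  refine (hi₀ i).trans ?_
  have hwn : ∀ k ≤ n, 0 ≤ w k := by
    intro k hk
    induction k with
    | zero => exact hw0
    | succ k ih => exact (ih (by omega)).trans (hw k (by omega))
  have hhist := mul_sub_one_le_sum_mul_sub w (Φ · i₀) n hw0 hw
    fun k hk => (abs_le.1 (hΦ k hk i₀)).2
  have hlap : ε ^ 2 * (A *ᵥ Φ (n + 1)) i₀ ≤ 0 := mul_nonpos_of_nonneg_of_nonpos (sq_nonneg ε)
    (A.mulVec_apply_nonpos_of_forall_le hrow hoff _ i₀ hi₀)
  have hf := neg_le_pow_three_sub_mul hκ (hΦ n le_rfl i₀)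
  have h := congrFun hscheme i₀
  simp only [Pi.add_apply, Pi.sub_apply, Pi.smul_apply, Finset.sum_apply, smul_eq_mul,
    Pi.zero_apply] at h
  by_contra! hgt
  nlinarith [mul_nonneg (hwn n le_rfl) (sub_nonneg.2 hgt.le)]

lemma L1scheme_step_abs_le_one (hrow : ∀ i, ∑ j, A i j = 0) (hoff : ∀ i j, i ≠ j → 0 ≤ A i j)
    (hκ : 2 ≤ κ) (hw0 : 0 ≤ w 0) (hw : ∀ k < n, w k ≤ w (k + 1))
    (hΦ : ∀ k ≤ n, ∀ i, |Φ k i| ≤ 1)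
    (hscheme : (∑ k ∈ range (n + 1), w k • (Φ (k + 1) - Φ k)) + κ • Φ (n + 1)
      - ε ^ 2 • A *ᵥ Φ (n + 1) + (fun i => Φ n i ^ 3 - (1 + κ) * Φ n i) = 0) (i : ι) :
    |Φ (n + 1) i| ≤ 1 := by
  refine abs_le.2 ⟨?_, L1scheme_step_le_one hrow hoff hκ hw0 hw hΦ hscheme i⟩
  have hscheme_neg : (∑ k ∈ range (n + 1), w k • ((-Φ) (k + 1) - (-Φ) k)) + κ • (-Φ) (n + 1)
      - ε ^ 2 • A *ᵥ (-Φ) (n + 1) + (fun i => (-Φ) n i ^ 3 - (1 + κ) * (-Φ) n i) = 0 := by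
    have hsum : ∑ k ∈ range (n + 1), w k • ((-Φ) (k + 1) - (-Φ) k) =
        -∑ k ∈ range (n + 1), w k • (Φ (k + 1) - Φ k) := by
      rw [← sum_neg_distrib]
      refine sum_congr rfl fun k _ => ?_
      rw [Pi.neg_apply, Pi.neg_apply, neg_sub_neg, ← smul_neg, neg_sub]
    rw [← neg_eq_zero, ← hscheme, hsum]
    ext j
    simp only [Pi.add_apply, Pi.sub_apply, Pi.smul_apply, Pi.neg_apply, Matrix.mulVec_neg,
      smul_eq_mul]
    ring
  have := L1scheme_step_le_one hrow hoff hκ hw0 hw (by simpa using hΦ) hscheme_neg i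
  simp only [Pi.neg_apply] at this
  linarith

end L1Step

theorem stmt16_general (α h ε κ : ℝ) (hα0 : 0 < α) (hα1 : α < 1)
    (hκ : 2 ≤ κ)
    (M N : ℕ) (hM : 2 ≤ M) (t : ℕ → ℝ)
    (hmono : ∀ n, n < N → t n < t (n + 1))
    (Φ : ℕ → Fin M × Fin M → ℝ) (hΦ0 : ‖Φ 0‖ ≤ 1)
    (hscheme : ∀ n, n ≤ N - 1 →
      (∑ k ∈ Finset.range (n + 1), L1kernel α t n (n - k) • (Φ (k + 1) - Φ k))
        + κ • Φ (n + 1) - ε ^ 2 • (Dh M h).mulVec (Φ (n + 1))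
        + (fun i => (Φ n i) ^ 3 - (1 + κ) * Φ n i) = 0) :
    ∀ n, n ≤ N → ‖Φ n‖ ≤ 1 := by
  have hle : ∀ {i j}, i ≤ j → j ≤ N → t i ≤ t j := fun hij hj =>
    (strictMonoOn_Iic_of_lt_succ hmono).monotoneOn (Set.mem_Iic.2 (hij.trans hj))
      (Set.mem_Iic.2 hj) hij
  intro n
  induction n using Nat.strong_induction_on with
  | _ n ih =>
    intro hn
    cases n with
    | zero => exact hΦ0
    | succ m =>
      have hΦ : ∀ k ≤ m, ∀ i, |Φ k i| ≤ 1 := fun k hk i =>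
        (norm_le_pi_norm (Φ k) i).trans (ih k (by omega) (by omega))
      refine (pi_norm_le_iff_of_nonneg zero_le_one).2 fun i => ?_
      exact L1scheme_step_abs_le_one (w := fun k => L1kernel α t m (m - k)) (Dh_row_sum hM h)
        (fun _ _ => Dh_nonneg_of_ne M h) hκ
        (L1kernel_nonneg hα1 m.zero_le (hle (by omega) hn) (hle (by omega) hn))
        (fun k hk => L1kernel_le_succ hα0.le hα1 hk (hmono k (by omega))
          (hmono (k + 1) (by omega)) (hle (by omega) hn))
        hΦ (hscheme m (by omega)) i

/-- MBP preservation of the first-order stabilized L1 scheme: if `‖Φ⁰‖_∞ ≤ 1` and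
`Σ_{k=0}^n a^{(n)}_{n-k}(Φ^{k+1} - Φ^k) + κΦ^{n+1} - ε²D_hΦ^{n+1} + f_κ(Φⁿ) = 0`
for all `0 ≤ n ≤ N-1`, then `‖Φⁿ‖_∞ ≤ 1` for all `0 ≤ n ≤ N`, regardless of the
time-step sizes. The norm on `Fin M × Fin M → ℝ` is the sup norm. -/
theorem stmt16 (α T h ε κ : ℝ) (hα0 : 0 < α) (hα1 : α < 1)
    (hh : 0 < h) (hε : 0 < ε) (hκ : 2 ≤ κ)
    (M N : ℕ) (hM : 2 ≤ M) (hN : 1 ≤ N) (t : ℕ → ℝ)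
    (ht0 : t 0 = 0) (htT : t N = T)
    (hmono : ∀ n, n < N → t n < t (n + 1))
    (Φ : ℕ → Fin M × Fin M → ℝ) (hΦ0 : ‖Φ 0‖ ≤ 1)
    (hscheme : ∀ n, n ≤ N - 1 →
      (∑ k ∈ Finset.range (n + 1), L1kernel α t n (n - k) • (Φ (k + 1) - Φ k))
        + κ • Φ (n + 1) - ε ^ 2 • (Dh M h).mulVec (Φ (n + 1))
        + (fun i => (Φ n i) ^ 3 - (1 + κ) * Φ n i) = 0) :
    ∀ n, n ≤ N → ‖Φ n‖ ≤ 1 :=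
  stmt16_general α h ε κ hα0 hα1 hκ M N hM t hmono Φ hΦ0 hscheme
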